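/- Let T be a decision tree over α with cumulative tests, let ℓ be a leaf of T, and let n be an internal node on the root-to-ℓ path that the path exits via the right child. Then for every x : α such that the test of n holds at x, there exists a leaf ℓ'' of T that lexicographically precedes ℓ and whose positive formula holds at x. -/

import Mathlib

/-- A decision tree over a type `α` of examples: a finite binary tree where every
internal node carries a test `Q : α → Prop` and every leaf carries a real value. -/
inductive DTree (α : Type*) where
  | leaf (v : ℝ)
  | node (Q : α → Prop) (l r : DTree α)

namespace DTree

open Classical

variable {α : Type*}

/-- A leaf of the tree is identified by its root-to-leaf path: a list of Booleans,
`true` meaning "descend to the left child" and `false` "descend to the right child". -/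
def IsLeaf : DTree α → List Bool → Prop
  | leaf _, [] => True
  | node _ l _, true :: p => IsLeaf l p
  | node _ _ r, false :: p => IsLeaf r p
  | _, _ => False

/-- The value carried by the leaf at a given path (if any). -/
def leafValue : DTree α → List Bool → Option ℝ
  | leaf v, [] => some v
  | node _ l _, true :: p => leafValue l p
  | node _ _ r, false :: p => leafValue r p
  | _, _ => none

/-- Evaluation of the tree at `x`: starting at the root, at each internal node descend
to the left child if the node's test holds at `x` and to the right child otherwise.
`evalPath T x` is the root-to-leaf path of the leaf thus reached. -/
noncomputable def evalPath : DTree α → α → List Bool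
  | leaf _, _ => []
  | node Q l r, x => if Q x then true :: evalPath l x else false :: evalPath r x

/-- The value returned by evaluating the tree at `x`. -/
noncomputable def evalTree : DTree α → α → ℝ
  | leaf v, _ => v
  | node Q l r, x => if Q x then evalTree l x else evalTree r x

/-- The path formula of the leaf at path `p`, at example `x`: the conjunction, over all
internal nodes on the root-to-leaf path, of the test at `x` when the path exits the node
via its left child, and of the negation of the test when it exits via the right child. -/
def pathFormula : DTree α → List Bool → α → Prop
  | leaf _, [], _ => True
  | node Q l _, true :: p, x => Q x ∧ pathFormula l p x
  | node Q _ r, false :: p, x => ¬ Q x ∧ pathFormula r p x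
  | _, _, _ => False

/-- The positive formula of the leaf at path `p`, at example `x`: the conjunction of the
tests at `x` of those internal nodes on the root-to-leaf path that the path exits via the
left child (the empty conjunction being `True`). -/
def posFormula : DTree α → List Bool → α → Prop
  | leaf _, [], _ => True
  | node Q l _, true :: p, x => Q x ∧ posFormula l p x
  | node _ _ r, false :: p, x => posFormula r p x
  | _, _, _ => False

/-- The subtree rooted at the node reached by following a path from the root. -/
def subtreeAt : DTree α → List Bool → Option (DTree α)
  | t, [] => some t
  | node _ l _, true :: p => subtreeAt l p
  | node _ _ r, false :: p => subtreeAt r p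
  | leaf _, _ :: _ => none

/-- The test carried by the internal node at a given path (if any). -/
def testAt (T : DTree α) (p : List Bool) : Option (α → Prop) :=
  match subtreeAt T p with
  | some (node Q _ _) => some Q
  | _ => none

/-- Leaves are ordered lexicographically: every leaf in the left subtree of an internal
node precedes every leaf in its right subtree.  Concretely, path `p` precedes path `q`
iff after some common prefix, `p` goes left where `q` goes right. -/
def leafLT (p q : List Bool) : Prop :=
  ∃ s p' q' : List Bool, p = s ++ true :: p' ∧ q = s ++ false :: q'

/-- The tree has cumulative tests: for every internal node `n` and every strict ancestor
`m` of `n` such that the path from `m` to `n` passes through the left child of `m`,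
the test of `n` at `x` implies the test of `m` at `x`, for every `x`. -/
def Cumulative (T : DTree α) : Prop :=
  ∀ (p q : List Bool) (Qm Qn : α → Prop),
    testAt T p = some Qm → testAt T (p ++ true :: q) = some Qn →
    ∀ x : α, Qn x → Qm x

end DTree

/-!
The leaf is found in the left subtree of `n`, by following the evaluation path of `x` from
the left child of `n`. Its positive formula consists of the test of `n`, which holds at `x`;
the tests of the ancestors of `n` whose left subtree contains `n`, which hold by cumulativity;
and the tests below `n` on the evaluation path, which hold whenever the path goes left.
-/

namespace DTree

variable {α : Type*}

theorem isLeaf_evalPath : ∀ (t : DTree α) (x : α), IsLeaf t (evalPath t x)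
  | leaf _, _ => trivial
  | node Q l r, x => by
    by_cases h : Q x <;> simp [evalPath, h, IsLeaf, isLeaf_evalPath _ x]

theorem posFormula_evalPath : ∀ (t : DTree α) (x : α), posFormula t (evalPath t x) x
  | leaf _, _ => trivial
  | node Q l r, x => by
    by_cases h : Q x <;> simp [evalPath, h, posFormula, posFormula_evalPath _ x]

theorem Cumulative.left {Q : α → Prop} {l r : DTree α} (h : Cumulative (node Q l r)) :
    Cumulative l :=
  fun p => h (true :: p)

theorem Cumulative.right {Q : α → Prop} {l r : DTree α} (h : Cumulative (node Q l r)) :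
    Cumulative r :=
  fun p => h (false :: p)

theorem exists_left_leaf_posFormula_of_testAt {T : DTree α} (hT : Cumulative T)
    {s : List Bool} {Q : α → Prop} (hQ : testAt T s = some Q) {x : α} (hx : Q x) :
    ∃ q : List Bool, IsLeaf T (s ++ true :: q) ∧ posFormula T (s ++ true :: q) x := by
  induction s generalizing T with
  | nil =>
    obtain ⟨Q', l, r, rfl⟩ : ∃ Q' l r, T = node Q' l r := by
      cases T with
      | leaf _ => simp [testAt, subtreeAt] at hQ
      | node Q' l r => exact ⟨Q', l, r, rfl⟩
    obtain rfl : Q' = Q := by simpa [testAt, subtreeAt] using hQ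
    exact ⟨evalPath l x, isLeaf_evalPath l x, hx, posFormula_evalPath l x⟩
  | cons b s ih =>
    cases T with
    | leaf _ => cases b <;> simp [testAt, subtreeAt] at hQ
    | node Q' l r =>
      cases b with
      | true =>
        have hQ' : Q' x := hT [] s Q' Q rfl hQ x hx
        obtain ⟨q, hleaf, hpos⟩ := ih hT.left hQ
        exact ⟨q, hleaf, hQ', hpos⟩
      | false => exact ih hT.right hQ

end DTree

open DTree in
theorem right_exit_test_gives_earlier_positive_leaf_general
    {α : Type*} (T : DTree α) (hT : Cumulative T) (s p : List Bool) (Q : α → Prop)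
    (hQ : testAt T s = some Q) :
    ∀ x : α, Q x →
      ∃ ℓ'' : List Bool, IsLeaf T ℓ'' ∧ leafLT ℓ'' (s ++ false :: p) ∧
        posFormula T ℓ'' x := by
  intro x hx
  obtain ⟨q, hleaf, hpos⟩ := exists_left_leaf_posFormula_of_testAt hT hQ hx
  exact ⟨s ++ true :: q, hleaf, ⟨s, q, p, rfl, rfl⟩, hpos⟩

open DTree in
/-- Let `T` be a decision tree with cumulative tests, let `ℓ = s ++ false :: p` be a
leaf of `T`, and let `n` be the internal node at path `s` (carrying test `Q`), an
internal node on the root-to-`ℓ` path that the path exits via the right child.  Then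
for every `x` such that `Q x` holds, there exists a leaf `ℓ''` of `T` that
lexicographically precedes `ℓ` and whose positive formula holds at `x`. -/
theorem right_exit_test_gives_earlier_positive_leaf
    {α : Type*} (T : DTree α) (hT : Cumulative T) (s p : List Bool) (Q : α → Prop)
    (hQ : testAt T s = some Q) (hℓ : IsLeaf T (s ++ false :: p)) :
    ∀ x : α, Q x →
      ∃ ℓ'' : List Bool, IsLeaf T ℓ'' ∧ leafLT ℓ'' (s ++ false :: p) ∧
        posFormula T ℓ'' x :=
  right_exit_test_gives_earlier_positive_leaf_general T hT s p Q hQ
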